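/- For the surface of revolution φ(x¹,x²) = (f cos x², f sin x², x¹) and the rotated 1-form with angle θ, the quantity E = b² Σ_k (−1)^{γ+τ} z^k_{γ̃} z^k_{τ̃} (cos²θ·z¹_γ z¹_τ + sin²θ·z²_γ z²_τ + 2 sinθ cosθ·z¹_γ z²_τ) equals b² f(x¹)² (f'(x¹)² + sin²(x² − θ)). -/
import Mathlib

open Real

/-- For the surface of revolution and the rotated 1-form with angle `θ`, the quantity
`E = b² Σ_{k,γ,τ} (−1)^(γ+τ) z^k_{γ̃} z^k_{τ̃} (cos²θ z¹_γ z¹_τ + sin²θ z²_γ z²_τ +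
2 sinθ cosθ z¹_γ z²_τ)` equals `b² f(x¹)² (f'(x¹)² + sin²(x² − θ))`. -/
theorem stmt_9 (b θ : ℝ) (hb : b ≠ 0) (x1 x2 : ℝ) (f : ℝ → ℝ)
    (hf : DifferentiableAt ℝ f x1)
    (z : Matrix (Fin 3) (Fin 2) ℝ)
    (hz : z = Matrix.of ![![deriv f x1 * Real.cos x2, -(f x1 * Real.sin x2)],
                          ![deriv f x1 * Real.sin x2, f x1 * Real.cos x2],
                          ![1, 0]])
    (swap : Fin 2 → Fin 2) (hswap : swap = ![1, 0]) :
    b ^ 2 * ∑ k : Fin 3, ∑ γ : Fin 2, ∑ τ : Fin 2,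
        (-1 : ℝ) ^ ((γ : ℕ) + (τ : ℕ)) * z k (swap γ) * z k (swap τ) *
          (Real.cos θ ^ 2 * z 0 γ * z 0 τ + Real.sin θ ^ 2 * z 1 γ * z 1 τ +
            2 * Real.sin θ * Real.cos θ * z 0 γ * z 1 τ)
      = b ^ 2 * (f x1) ^ 2 * ((deriv f x1) ^ 2 + Real.sin (x2 - θ) ^ 2) := by
  subst hz hswap
  simp [Fin.sum_univ_succ, Real.sin_sq, Real.sin_sub, Real.cos_sub]
  ring_nf
  linear_combination (b^2 * f x1^2 * deriv f x1^2 * (Real.sin x2^2 + Real.cos x2^2 + 1)) *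
      Real.sin_sq_add_cos_sq x2 -
    (b^2 * f x1^2 * Real.cos x2^2) * Real.sin_sq_add_cos_sq θ
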